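/- Let Θ be the solenoid of type (w₁, w₂, …), let n ≥ 0, and let l be a positive integer relatively prime to w_{n'} for all n' > n. Then the mapping torus of the l-th iterate ψₙ^l of the translation ψₙ : Γₙ → Γₙ, ψₙ(x) = γ(w₁⋯wₙ)·x, is homeomorphic to Θ. -/

import Mathlib

/-!
The flow `t ↦ γ((w₁⋯wₙ) t)` meets `Γₙ` exactly at integer times and `Θ = γ(ℝ) · Γₙ`, so
`(x, t) ↦ γ((w₁⋯wₙ) t) · x` descends to a continuous bijection from the mapping torus of `ψₙ`
onto `Θ`, a homeomorphism by compactness. The `k`-th coordinates of points of `Γₙ` are torsion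
of order dividing `wₙ₊₁⋯w_k`, all prime to `l`, so `x ↦ x ^ l` is an automorphism of `Γₙ`
(its inverse raises the `k`-th coordinate to an inverse of `l` modulo that order). It conjugates
`ψₙ` to `ψₙ^l`, translation by `γ(w₁⋯wₙ) ^ l`, and conjugate maps have homeomorphic mapping tori.
-/

open Topology

/-- The solenoid of type `(w 0, w 1, …)` (denoted `(w₁, w₂, …)` in the paper),
as a subgroup of the product of countably many circles:
`{(x₀, x₁, …) : xₙ₋₁ = xₙ ^ wₙ for all n ≥ 1}`. -/
noncomputable def solenoidSubgroup (w : ℕ → ℕ) : Subgroup (ℕ → Circle) where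
  carrier := {x | ∀ n, x n = x (n + 1) ^ w n}
  one_mem' := by intro n; simp
  mul_mem' := by intro a b ha hb n; simp only [Pi.mul_apply, ha n, hb n, mul_pow]
  inv_mem' := by intro a ha n; simp only [Pi.inv_apply, ha n, inv_pow]

/-- The solenoid as a topological space, with the subspace topology from the
product topology. -/
noncomputable abbrev Solenoid (w : ℕ → ℕ) : Type :=
  ↥(solenoidSubgroup w)

/-- `Γₙ`, the kernel of the projection of the solenoid onto its `n`-th
coordinate: `{x ∈ Θ | x₀ = x₁ = ⋯ = xₙ = 1}`, as a subgroup of the solenoid. -/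
noncomputable def gammaSubgroup (w : ℕ → ℕ) (n : ℕ) : Subgroup (Solenoid w) where
  carrier := {x | ∀ k ≤ n, (x : ℕ → Circle) k = 1}
  one_mem' := by intro k _; simp
  mul_mem' := by
    intro a b ha hb k hk
    simp only [Subgroup.coe_mul, Pi.mul_apply, ha k hk, hb k hk, one_mul]
  inv_mem' := by
    intro a ha k hk
    simp only [Subgroup.coe_inv, Pi.inv_apply, ha k hk, inv_one]

private lemma circle_exp_pow (b : ℝ) (m : ℕ) :
    Circle.exp b ^ m = Circle.exp (m * b) := by
  induction m with
  | zero => simp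
  | succ k ih =>
    rw [pow_succ, ih, ← Circle.exp_add, Nat.cast_succ]
    ring_nf

private lemma w_cast_ne_zero {w : ℕ → ℕ} (hw : ∀ n, 1 < w n) (j : ℕ) :
    (w j : ℝ) ≠ 0 := by
  exact_mod_cast (Nat.zero_lt_of_lt (hw j)).ne'

private lemma prod_w_ne_zero {w : ℕ → ℕ} (hw : ∀ n, 1 < w n) (k : ℕ) :
    (∏ j ∈ Finset.range k, (w j : ℝ)) ≠ 0 :=
  Finset.prod_ne_zero_iff.mpr fun j _ => w_cast_ne_zero hw j

private lemma solenoidGamma_mem (w : ℕ → ℕ) (hw : ∀ n, 1 < w n) (t : ℝ) :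
    (fun k => Circle.exp (2 * Real.pi * t / ∏ j ∈ Finset.range k, (w j : ℝ)))
      ∈ solenoidSubgroup w := by
  intro k
  show Circle.exp _ = Circle.exp _ ^ w k
  rw [circle_exp_pow]
  congr 1
  rw [Finset.prod_range_succ]
  have h1 := prod_w_ne_zero hw k
  have h2 := w_cast_ne_zero hw k
  field_simp

/-- The one-parameter subgroup `γ : ℝ → Θ`,
`γ(t) = (e^{2πit}, e^{2πit/w₁}, e^{2πit/(w₁w₂)}, …)`. -/
noncomputable def solenoidGamma (w : ℕ → ℕ) (hw : ∀ n, 1 < w n) (t : ℝ) :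
    Solenoid w :=
  ⟨fun k => Circle.exp (2 * Real.pi * t / ∏ j ∈ Finset.range k, (w j : ℝ)),
    solenoidGamma_mem w hw t⟩

private lemma solenoidGamma_mem_gamma (w : ℕ → ℕ) (hw : ∀ n, 1 < w n) (n : ℕ) :
    solenoidGamma w hw (∏ j ∈ Finset.range n, (w j : ℝ)) ∈ gammaSubgroup w n := by
  intro k hk
  show Circle.exp _ = 1
  have h1 := prod_w_ne_zero hw k
  have key : 2 * Real.pi * (∏ j ∈ Finset.range n, (w j : ℝ)) /
      (∏ j ∈ Finset.range k, (w j : ℝ)) =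
      ((∏ j ∈ Finset.Ico k n, w j : ℕ) : ℤ) * (2 * Real.pi) := by
    rw [← Finset.prod_range_mul_prod_Ico (fun j => ((w j : ℝ))) hk]
    push_cast
    field_simp
  rw [key]
  exact Circle.exp_int_mul_two_pi _

/-- The translation `ψₙ : Γₙ → Γₙ`, `ψₙ(x) = γ(w₁⋯wₙ) · x`. -/
noncomputable def solenoidPsi (w : ℕ → ℕ) (hw : ∀ n, 1 < w n) (n : ℕ) :
    ↥(gammaSubgroup w n) → ↥(gammaSubgroup w n) :=
  fun x =>
    (⟨solenoidGamma w hw (∏ j ∈ Finset.range n, (w j : ℝ)),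
      solenoidGamma_mem_gamma w hw n⟩ : ↥(gammaSubgroup w n)) * x

/-- The defining identification of the mapping torus of `f : Y → Y`:
`(y, 1)` is glued to `(f y, 0)` in `Y × [0,1]`. -/
def MappingTorusRel {Y : Type*} (f : Y → Y) (a b : Y × ↥unitInterval) : Prop :=
  a.2 = 1 ∧ b.2 = 0 ∧ b.1 = f a.1

/-- The mapping torus of `f : Y → Y`: the quotient of `Y × [0,1]` obtained by
identifying `(y, 1)` with `(f y, 0)`, with the quotient topology. -/
def MappingTorus {Y : Type*} [TopologicalSpace Y] (f : Y → Y) : Type _ :=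
  Quot (MappingTorusRel f)

noncomputable instance {Y : Type*} [TopologicalSpace Y] (f : Y → Y) :
    TopologicalSpace (MappingTorus f) :=
  inferInstanceAs (TopologicalSpace (Quot (MappingTorusRel f)))

namespace MappingTorus

variable {Y Y' Z : Type*} [TopologicalSpace Y] [TopologicalSpace Y'] [TopologicalSpace Z]

def homeomorphOfSemiconj {f : Y → Y} {g : Y' → Y'} (h : Y ≃ₜ Y')
    (hh : Function.Semiconj h f g) : MappingTorus f ≃ₜ MappingTorus g :=
  Homeomorph.Quot.congr (h.prodCongr (Homeomorph.refl unitInterval)) fun p q => by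
    change _ ∧ _ ∧ q.1 = f p.1 ↔ p.2 = 1 ∧ q.2 = 0 ∧ h q.1 = g (h p.1)
    rw [← hh p.1, h.injective.eq_iff]

noncomputable def homeomorphOfLift [CompactSpace Y] [T2Space Z] {f : Y → Y}
    (F : Y × unitInterval → Z) (hF : Continuous F) (hglue : ∀ y, F (y, 1) = F (f y, 0))
    (hinj : ∀ p q, F p = F q → p = q ∨ MappingTorusRel f p q ∨ MappingTorusRel f q p)
    (hsurj : Function.Surjective F) : MappingTorus f ≃ₜ Z :=
  have : CompactSpace (MappingTorus f) := inferInstanceAs (CompactSpace (Quot _))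
  let lift : MappingTorus f → Z := Quot.lift F <| by
    rintro ⟨y, t⟩ ⟨y', s⟩ ⟨ht, hs, hy'⟩
    simp only at ht hs hy'
    subst ht hs hy'
    exact hglue y
  have hbij : Function.Bijective lift := by
    refine ⟨fun a b hab => ?_, hsurj.forall.2 fun p => ⟨Quot.mk _ p, rfl⟩⟩
    induction a using Quot.ind with | _ p => ?_
    induction b using Quot.ind with | _ q => ?_
    rcases hinj p q hab with rfl | hpq | hqp
    · rfl
    · exact Quot.sound hpq
    · exact (Quot.sound hqp).symm
  (continuous_quot_lift _ hF).homeoOfEquivCompactToT2 (f := Equiv.ofBijective lift hbij)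

end MappingTorus

lemma AddChar.map_intCast_mem {G : Type*} [Group G] {K : Subgroup G} (c : AddChar ℝ G)
    (h1 : c 1 ∈ K) (m : ℤ) : c m ∈ K := by
  rw [← zsmul_one, AddChar.map_zsmul_eq_zpow]
  exact K.zpow_mem h1 m

namespace MappingTorus

variable {G : Type*} [Group G] {K : Subgroup G} (c : AddChar ℝ G) (a : K) (ha : c 1 = a)
include ha

lemma mappingTorusRel_of_addChar_mul_eq {x y : K} {t s : unitInterval}
    (h : c t * x = c s * y) (hts : (t : ℝ) - s = 1) :
    MappingTorusRel (fun z : K => a * z) (x, t) (y, s) := by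
  have ht : (t : ℝ) = 1 := by linarith [unitInterval.le_one t, unitInterval.nonneg s]
  have hs : (s : ℝ) = 0 := by linarith
  refine ⟨Subtype.ext ht, Subtype.ext hs, Subtype.ext ?_⟩
  rw [ht, hs, ha, AddChar.map_zero_eq_one, one_mul] at h
  exact h.symm

lemma eq_or_mappingTorusRel_of_addChar_mul_eq (hcK : ∀ t, c t ∈ K → ∃ m : ℤ, t = m)
    {x y : K} {t s : unitInterval} (h : c t * x = c s * y) :
    (x, t) = (y, s) ∨ MappingTorusRel (fun z : K => a * z) (x, t) (y, s) ∨
      MappingTorusRel (fun z : K => a * z) (y, s) (x, t) := by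
  have hdiff : c (t - s) = y * (x : G)⁻¹ := by
    rw [sub_eq_neg_add, AddChar.map_add_eq_mul, AddChar.map_neg_eq_inv, inv_mul_eq_iff_eq_mul,
      ← mul_assoc, ← h, mul_inv_cancel_right]
  obtain ⟨m, hm⟩ := hcK _ (hdiff ▸ K.mul_mem y.2 (K.inv_mem x.2))
  have hm_lo : -1 ≤ m := by
    have : (-1 : ℝ) ≤ m := by linarith [unitInterval.nonneg t, unitInterval.le_one s]
    exact_mod_cast this
  have hm_hi : m ≤ 1 := by
    have : (m : ℝ) ≤ 1 := by linarith [unitInterval.le_one t, unitInterval.nonneg s]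
    exact_mod_cast this
  interval_cases m
  all_goals push_cast at hm
  · exact .inr (.inr (mappingTorusRel_of_addChar_mul_eq c a ha h.symm (by linarith)))
  · obtain rfl : t = s := Subtype.ext (by linarith)
    exact .inl (congrArg (·, t) (Subtype.ext (mul_left_cancel h)))
  · exact .inr (.inl (mappingTorusRel_of_addChar_mul_eq c a ha h (by linarith)))

lemma surjective_addChar_mul (hgen : ∀ g, ∃ t, (c t)⁻¹ * g ∈ K) :
    Function.Surjective fun p : K × unitInterval => c p.2 * p.1 := by
  intro g
  obtain ⟨t, ht⟩ := hgen g
  have hfract : (c (Int.fract t))⁻¹ * g = c ⌊t⌋ * ((c t)⁻¹ * g) := by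
    have hsplit : c t = c (Int.fract t) * c ⌊t⌋ := by
      rw [← AddChar.map_add_eq_mul, Int.fract_add_floor]
    rw [hsplit]
    group
  refine ⟨(⟨_, hfract ▸ K.mul_mem (c.map_intCast_mem (ha ▸ a.2) ⌊t⌋) ht⟩,
    ⟨Int.fract t, Int.fract_nonneg t, (Int.fract_lt_one t).le⟩), ?_⟩
  exact mul_inv_cancel_left _ _

noncomputable def homeomorphOfAddChar [TopologicalSpace G] [ContinuousMul G] [T2Space G]
    [CompactSpace K] (hc : Continuous c) (hcK : ∀ t, c t ∈ K → ∃ m : ℤ, t = m)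
    (hgen : ∀ g, ∃ t, (c t)⁻¹ * g ∈ K) : MappingTorus (fun x : K => a * x) ≃ₜ G :=
  homeomorphOfLift (fun p => c p.2 * p.1) (by fun_prop)
    (fun x => by simp [ha])
    (fun _ _ => eq_or_mappingTorusRel_of_addChar_mul_eq c a ha hcK)
    (surjective_addChar_mul c a ha hgen)

end MappingTorus

lemma Nat.mul_pow_totient_sub_one_modEq_one {l m : ℕ} (hm : 0 < m) (h : l.Coprime m) :
    l * l ^ (m.totient - 1) ≡ 1 [MOD m] := by
  rw [mul_pow_sub_one (Nat.totient_pos.mpr hm).ne']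
  exact Nat.ModEq.pow_totient h

section Solenoid

variable {w : ℕ → ℕ}

lemma solenoidSubgroup.apply_eq_pow {x : ℕ → Circle} (hx : x ∈ solenoidSubgroup w) {a b : ℕ}
    (hab : a ≤ b) : x a = x b ^ ∏ j ∈ Finset.Ico a b, w j := by
  induction b, hab using Nat.le_induction with
  | base => simp
  | succ b hab ih =>
    rw [ih, hx b, ← pow_mul, Finset.prod_Ico_succ_top hab, mul_comm]

lemma mem_gammaSubgroup_iff {n : ℕ} {x : Solenoid w} :
    x ∈ gammaSubgroup w n ↔ (x : ℕ → Circle) n = 1 :=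
  ⟨fun hx => hx n le_rfl, fun hx k hk => by
    rw [solenoidSubgroup.apply_eq_pow x.2 hk, hx, one_pow]⟩

lemma gammaSubgroup.apply_pow_prod_eq_one {n : ℕ} {x : Solenoid w}
    (hx : x ∈ gammaSubgroup w n) (k : ℕ) : (x : ℕ → Circle) k ^ ∏ j ∈ Finset.Ico n k, w j = 1 := by
  rcases le_or_gt n k with hnk | hkn
  · rw [← solenoidSubgroup.apply_eq_pow x.2 hnk, mem_gammaSubgroup_iff.mp hx]
  · rw [Finset.Ico_eq_empty_of_le hkn.le, Finset.prod_empty, pow_one, hx k hkn.le]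

variable (w) in
lemma isClosed_solenoidSubgroup : IsClosed (solenoidSubgroup w : Set (ℕ → Circle)) := by
  simp only [solenoidSubgroup, Subgroup.coe_set_mk, Submonoid.coe_set_mk, Subsemigroup.coe_set_mk,
    Set.ofPred_forall]
  exact isClosed_iInter fun k => isClosed_eq (continuous_apply k) ((continuous_apply _).pow _)

instance : CompactSpace (Solenoid w) :=
  isCompact_iff_compactSpace.mp (isClosed_solenoidSubgroup w).isCompact

instance (n : ℕ) : CompactSpace (gammaSubgroup w n) := by
  refine isCompact_iff_compactSpace.mp (IsClosed.isCompact ?_)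
  have : (gammaSubgroup w n : Set (Solenoid w)) = {x : Solenoid w | (x : ℕ → Circle) n = 1} :=
    Set.ext fun _ => mem_gammaSubgroup_iff
  rw [this]
  exact isClosed_eq ((continuous_apply n).comp continuous_subtype_val) continuous_const

section Root

variable (hw : ∀ j, 0 < w j) {n l : ℕ} (hcop : ∀ m ≥ n, l.Coprime (w m))
include hw hcop

variable (w n l) in
noncomputable def gammaRootExp (k : ℕ) : ℕ := l ^ ((∏ j ∈ Finset.Ico n k, w j).totient - 1)

lemma mul_gammaRootExp_modEq_one (k : ℕ) :
    l * gammaRootExp w n l k ≡ 1 [MOD ∏ j ∈ Finset.Ico n k, w j] :=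
  Nat.mul_pow_totient_sub_one_modEq_one (Finset.prod_pos fun j _ => hw j)
    (Nat.Coprime.prod_right fun j hj => hcop j (Finset.mem_Ico.mp hj).1)

lemma gammaRootExp_modEq_succ (k : ℕ) :
    gammaRootExp w n l k ≡ gammaRootExp w n l (k + 1) [MOD ∏ j ∈ Finset.Ico n k, w j] := by
  refine Nat.ModEq.cancel_left_of_coprime
    (Nat.Coprime.prod_right fun j hj => hcop j (Finset.mem_Ico.mp hj).1).symm ?_
  refine (mul_gammaRootExp_modEq_one hw hcop k).trans ?_
  exact ((mul_gammaRootExp_modEq_one hw hcop (k + 1)).of_dvd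
    (Finset.prod_dvd_prod_of_subset _ _ _ (Finset.Ico_subset_Ico_right k.le_succ))).symm

noncomputable def gammaRoot (x : gammaSubgroup w n) : gammaSubgroup w n :=
  ⟨⟨fun k => (x : ℕ → Circle) k ^ gammaRootExp w n l k, fun k => by
    dsimp only
    rw [← pow_mul, mul_comm, pow_mul, ← (x : Solenoid w).2 k]
    exact pow_eq_pow_of_modEq (gammaRootExp_modEq_succ hw hcop k)
      (gammaSubgroup.apply_pow_prod_eq_one x.2 k)⟩,
    fun k hk => by simp only [x.2 k hk, one_pow]⟩

lemma continuous_gammaRoot : Continuous (gammaRoot hw hcop) :=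
  .subtype_mk (.subtype_mk (continuous_pi fun k =>
    ((continuous_apply k).comp (continuous_subtype_val.comp continuous_subtype_val)).pow _) _) _

lemma gammaRoot_pow (x : gammaSubgroup w n) : gammaRoot hw hcop x ^ l = x :=
  Subtype.ext <| Subtype.ext <| funext fun k => by
    change ((x : ℕ → Circle) k ^ gammaRootExp w n l k) ^ l = (x : ℕ → Circle) k
    rw [← pow_mul, mul_comm]
    exact (pow_eq_pow_of_modEq (mul_gammaRootExp_modEq_one hw hcop k)
      (gammaSubgroup.apply_pow_prod_eq_one x.2 k)).trans (pow_one _)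

lemma gammaRoot_of_pow (x : gammaSubgroup w n) : gammaRoot hw hcop (x ^ l) = x :=
  Subtype.ext <| Subtype.ext <| funext fun k => by
    change ((x : ℕ → Circle) k ^ l) ^ gammaRootExp w n l k = (x : ℕ → Circle) k
    rw [← pow_mul]
    exact (pow_eq_pow_of_modEq (mul_gammaRootExp_modEq_one hw hcop k)
      (gammaSubgroup.apply_pow_prod_eq_one x.2 k)).trans (pow_one _)

noncomputable def gammaPowHomeomorph : gammaSubgroup w n ≃ₜ gammaSubgroup w n where
  toFun x := x ^ l
  invFun := gammaRoot hw hcop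
  left_inv := gammaRoot_of_pow hw hcop
  right_inv := gammaRoot_pow hw hcop
  continuous_toFun := continuous_pow l
  continuous_invFun := continuous_gammaRoot hw hcop

lemma semiconj_gammaPowHomeomorph (g : gammaSubgroup w n) :
    Function.Semiconj (gammaPowHomeomorph hw hcop) (g * ·) (g ^ l * ·) :=
  fun x => mul_pow g x l

end Root

end Solenoid

section Flow

variable {w : ℕ → ℕ} (hw : ∀ j, 1 < w j)

noncomputable def solenoidGammaChar : AddChar ℝ (Solenoid w) where
  toFun := solenoidGamma w hw
  map_zero_eq_one' := Subtype.ext <| funext fun k => by simp [solenoidGamma]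
  map_add_eq_mul' s t := Subtype.ext <| funext fun k => by
    simp [solenoidGamma, mul_add, add_div, Circle.exp_add]

lemma continuous_solenoidGamma : Continuous (solenoidGamma w hw) :=
  .subtype_mk (continuous_pi fun _ => Circle.exp.continuous.comp (by fun_prop)) _

variable (n : ℕ)

/-- `t ↦ γ((w₁⋯wₙ) t)`, whose time-one map on `Γₙ` is `ψₙ`. -/
noncomputable def solenoidFlow : AddChar ℝ (Solenoid w) :=
  (solenoidGammaChar hw).compAddMonoidHom
    (AddMonoidHom.mulLeft (∏ j ∈ Finset.range n, (w j : ℝ)))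

lemma solenoidFlow_apply_self (t : ℝ) :
    (solenoidFlow hw n t : ℕ → Circle) n = Circle.exp (2 * Real.pi * t) := by
  change Circle.exp (2 * Real.pi * ((∏ j ∈ Finset.range n, (w j : ℝ)) * t) /
    ∏ j ∈ Finset.range n, (w j : ℝ)) = _
  congr 1
  field_simp [prod_w_ne_zero hw n]

lemma exists_eq_intCast_of_solenoidFlow_mem {t : ℝ}
    (ht : solenoidFlow hw n t ∈ gammaSubgroup w n) : ∃ m : ℤ, t = m := by
  obtain ⟨m, hm⟩ := Circle.exp_eq_one.mp ((solenoidFlow_apply_self hw n t).symm.trans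
    (mem_gammaSubgroup_iff.mp ht))
  exact ⟨m, by nlinarith [Real.pi_pos]⟩

lemma exists_solenoidFlow_inv_mul_mem (y : Solenoid w) :
    ∃ t, (solenoidFlow hw n t)⁻¹ * y ∈ gammaSubgroup w n := by
  refine ⟨Complex.arg ((y : ℕ → Circle) n) / (2 * Real.pi), mem_gammaSubgroup_iff.mpr ?_⟩
  change ((solenoidFlow hw n _ : ℕ → Circle) n)⁻¹ * (y : ℕ → Circle) n = 1
  rw [solenoidFlow_apply_self, mul_div_cancel₀ _ Real.two_pi_pos.ne', Circle.exp_arg,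
    inv_mul_cancel]

lemma continuous_solenoidFlow : Continuous (solenoidFlow hw n) :=
  (continuous_solenoidGamma hw).comp (continuous_const_mul _)

noncomputable def mappingTorusSolenoidPsiHomeomorph :
    MappingTorus (solenoidPsi w hw n) ≃ₜ Solenoid w :=
  MappingTorus.homeomorphOfAddChar (solenoidFlow hw n) ⟨_, solenoidGamma_mem_gamma w hw n⟩
    (by simp [solenoidFlow, solenoidGammaChar]) (continuous_solenoidFlow hw n)
    (fun _ => exists_eq_intCast_of_solenoidFlow_mem hw n) (exists_solenoidFlow_inv_mul_mem hw n)

end Flow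

theorem mapping_torus_iterate_homeomorphic_solenoid_general
    (w : ℕ → ℕ) (hw : ∀ n, 1 < w n) (n : ℕ)
    (l : ℕ) (hcop : ∀ m ≥ n, Nat.Coprime l (w m)) :
    Nonempty (MappingTorus ((solenoidPsi w hw n)^[l]) ≃ₜ Solenoid w) := by
  have hconj : Function.Semiconj (gammaPowHomeomorph (fun j => Nat.zero_lt_of_lt (hw j)) hcop)
      (solenoidPsi w hw n) (solenoidPsi w hw n)^[l] := by
    unfold solenoidPsi
    rw [mul_left_iterate]
    exact semiconj_gammaPowHomeomorph _ hcop _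
  exact ⟨(MappingTorus.homeomorphOfSemiconj _ hconj).symm.trans
    (mappingTorusSolenoidPsiHomeomorph hw n)⟩

/-- **Claim 5:** If `l` is a positive integer relatively prime to `wₙ'` for all
`n' > n` (in our indexing, coprime to `w m` for all `m ≥ n`), then the mapping
torus of the `l`-th iterate `ψₙ^l` of the translation `ψₙ : Γₙ → Γₙ` is
homeomorphic to the solenoid `Θ`. -/
theorem mapping_torus_iterate_homeomorphic_solenoid
    (w : ℕ → ℕ) (hw : ∀ n, 1 < w n) (n : ℕ)
    (l : ℕ) (hl : 0 < l) (hcop : ∀ m ≥ n, Nat.Coprime l (w m)) :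
    Nonempty (MappingTorus ((solenoidPsi w hw n)^[l]) ≃ₜ Solenoid w) :=
  mapping_torus_iterate_homeomorphic_solenoid_general w hw n l hcop
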